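/- arXiv:0804.0326 — 2 statements merged into one kernel-verified Lean document; each statement's English description precedes it below -/
import Mathlib

section
/- A 𝒯-functor f: (X,a) → (Y,b) is left adjoint if and only if there exists a function g: Y → X such that b(Tf(𝔵), y) = a(𝔵, g(y)) for all 𝔵 ∈ TX and y ∈ Y, i.e. f_* = g^*. -/
universe u

namespace Paper

/-- A strict topological theory `𝒯 = (𝕋, V, ξ)`: a commutative unital quantale `V`
(a complete lattice with a commutative monoid structure whose multiplication preserves
suprema in each variable, with `⊥ < k`), a `Set`-monad `𝕋 = (T, e, m)` such that `T`
sends pullbacks to weak pullbacks and the naturality squares of `m` are weak pullbacks,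
and a `𝕋`-algebra structure `ξ : T V → V` for which `⊗` and `k` are `𝕋`-algebra
homomorphisms and `ξ_X := ξ ∘ T(-)` is a (monotone) natural transformation
`P_V → P_V T`. -/
structure TopTheory (V : Type u) [CompleteLattice V] (T : Type u → Type u) where
  tens : V → V → V
  unit : V
  tens_comm : ∀ u v : V, tens u v = tens v u
  tens_assoc : ∀ u v w : V, tens (tens u v) w = tens u (tens v w)
  unit_tens : ∀ v : V, tens unit v = v
  tens_sSup : ∀ (u : V) (S : Set V), tens u (sSup S) = ⨆ v ∈ S, tens u v
  bot_lt_unit : (⊥ : V) < unit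
  map : ∀ {X Y : Type u}, (X → Y) → T X → T Y
  map_id : ∀ {X : Type u}, map (id : X → X) = id
  map_comp : ∀ {X Y Z : Type u} (g : Y → Z) (f : X → Y) (𝔵 : T X),
    map (g ∘ f) 𝔵 = map g (map f 𝔵)
  e : ∀ {X : Type u}, X → T X
  m : ∀ {X : Type u}, T (T X) → T X
  e_nat : ∀ {X Y : Type u} (f : X → Y) (x : X), map f (e x) = e (f x)
  m_nat : ∀ {X Y : Type u} (f : X → Y) (𝔛 : T (T X)), map f (m 𝔛) = m (map (map f) 𝔛)
  m_e : ∀ {X : Type u} (𝔵 : T X), m (e 𝔵) = 𝔵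
  m_map_e : ∀ {X : Type u} (𝔵 : T X), m (map e 𝔵) = 𝔵
  m_assoc : ∀ {X : Type u} (𝔜 : T (T (T X))), m (m 𝔜) = m (map m 𝔜)
  /-- (BC): `T` sends pullbacks to weak pullbacks. -/
  map_bc : ∀ {X Y Z : Type u} (f : X → Z) (g : Y → Z) (𝔵 : T X) (𝔶 : T Y),
    map f 𝔵 = map g 𝔶 →
    ∃ 𝔴 : T {p : X × Y // f p.1 = g p.2},
      map (fun p => p.1.1) 𝔴 = 𝔵 ∧ map (fun p => p.1.2) 𝔴 = 𝔶
  /-- (BC): every naturality square of `m` is a weak pullback. -/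
  m_bc : ∀ {X Y : Type u} (f : X → Y) (𝔜 : T (T Y)) (𝔵 : T X),
    m 𝔜 = map f 𝔵 → ∃ 𝔛 : T (T X), map (map f) 𝔛 = 𝔜 ∧ m 𝔛 = 𝔵
  xi : T V → V
  xi_e : ∀ v : V, xi (e v) = v
  xi_m : ∀ 𝔙 : T (T V), xi (m 𝔙) = xi (map xi 𝔙)
  /-- `k : 1 → V` is a `𝕋`-algebra homomorphism. -/
  xi_unit : ∀ {X : Type u} (𝔵 : T X), xi (map (fun _ => unit) 𝔵) = unit
  /-- `⊗ : V × V → V` is a `𝕋`-algebra homomorphism. -/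
  xi_tens : ∀ 𝔴 : T (V × V),
    xi (map (fun p => tens p.1 p.2) 𝔴) = tens (xi (map Prod.fst 𝔴)) (xi (map Prod.snd 𝔴))
  /-- each component `ξ_X : V^X → V^{T X}` is monotone. -/
  xi_mono : ∀ {X : Type u} (φ φ' : X → V), (∀ x, φ x ≤ φ' x) →
    ∀ 𝔵 : T X, xi (map φ 𝔵) ≤ xi (map φ' 𝔵)
  /-- `ξ_X` is a natural transformation `P_V → P_V T`. -/
  xi_nat : ∀ {X Y : Type u} (f : X → Y) (φ : X → V) (𝔶 : T Y),
    (⨆ 𝔵 : {𝔵 : T X // map f 𝔵 = 𝔶}, xi (map φ 𝔵.1)) =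
      xi (map (fun y => ⨆ x : {x : X // f x = y}, φ x.1) 𝔶)

namespace TopTheory

variable {V : Type u} [CompleteLattice V] {T : Type u → Type u}

/-- The internal hom of the quantale: `u ⊗ (-) ⊣ hom (u, -)`. -/
def ihom (𝒯 : TopTheory V T) (u w : V) : V := sSup {z | 𝒯.tens u z ≤ w}

/-- The extension `T_ξ` of `T : Set → Set` to `V`-relations. -/
def Txi (𝒯 : TopTheory V T) {X Y : Type u} (r : X → Y → V) (𝔵 : T X) (𝔶 : T Y) : V :=
  ⨆ 𝔴 : {w : T (X × Y) // 𝒯.map Prod.fst w = 𝔵 ∧ 𝒯.map Prod.snd w = 𝔶},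
    𝒯.xi (𝒯.map (fun p => r p.1 p.2) 𝔴.1)

/-- Kleisli convolution `β ∘ α = β · T_ξ α · m_X°` of `𝒯`-relations
`α : X ⇸ Y` and `β : Y ⇸ Z`. -/
def kleisli (𝒯 : TopTheory V T) {X Y Z : Type u}
    (β : T Y → Z → V) (α : T X → Y → V) (𝔵 : T X) (z : Z) : V :=
  ⨆ 𝔛 : {𝔛 : T (T X) // 𝒯.m 𝔛 = 𝔵}, ⨆ 𝔶 : T Y, 𝒯.tens (𝒯.Txi α 𝔛.1 𝔶) (β 𝔶 z)

/-- The `𝒯`-relation `e_X° : X ⇸ X`. -/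
def unitRel (𝒯 : TopTheory V T) (X : Type u) (𝔵 : T X) (x : X) : V :=
  ⨆ _ : 𝔵 = 𝒯.e x, 𝒯.unit

/-- A `𝒯`-category structure on `X`: a `𝒯`-relation `a : X ⇸ X` with
`e_X° ≤ a` and `a ∘ a ≤ a`. -/
structure TCatStr (𝒯 : TopTheory V T) (X : Type u) where
  rel : T X → X → V
  le_refl : ∀ x : X, 𝒯.unit ≤ rel (𝒯.e x) x
  comp : ∀ (𝔵 : T X) (x : X), 𝒯.kleisli rel rel 𝔵 x ≤ rel 𝔵 x

/-- The `𝒯`-module conditions `φ ∘ a ≤ φ` and `b ∘ φ ≤ φ` for a `𝒯`-relation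
`φ : X ⇸ Y` between (structures underlying) `𝒯`-categories `(X,a)` and `(Y,b)`. -/
def IsTModRel (𝒯 : TopTheory V T) {X Y : Type u}
    (a : T X → X → V) (b : T Y → Y → V) (φ : T X → Y → V) : Prop :=
  (∀ 𝔵 y, 𝒯.kleisli φ a 𝔵 y ≤ φ 𝔵 y) ∧ (∀ 𝔵 y, 𝒯.kleisli b φ 𝔵 y ≤ φ 𝔵 y)

variable {𝒯 : TopTheory V T}

/-- `f_* = b · T f`. -/
def modStar {X Y : Type u} (b : 𝒯.TCatStr Y) (f : X → Y) (𝔵 : T X) (y : Y) : V :=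
  b.rel (𝒯.map f 𝔵) y

/-- `f^* = f° · b`. -/
def modCostar {X Y : Type u} (b : 𝒯.TCatStr Y) (f : X → Y) (𝔶 : T Y) (x : X) : V :=
  b.rel 𝔶 (f x)

/-- The extension `φ ⟜ ψ` of `φ : X ⇸∘ Y` along `ψ : X ⇸∘ Z`, given by
`(φ ⟜ ψ)(𝔷,y) = ⋀_{𝔵 ∈ T X} hom((T_ξ ψ · m_X°)(𝔵,𝔷), φ(𝔵,y))`. -/
def extend (𝒯 : TopTheory V T) {X Y Z : Type u}
    (φ : T X → Y → V) (ψ : T X → Z → V) (𝔷 : T Z) (y : Y) : V :=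
  ⨅ 𝔵 : T X, 𝒯.ihom (⨆ 𝔛 : {𝔛 : T (T X) // 𝒯.m 𝔛 = 𝔵}, 𝒯.Txi ψ 𝔛.1 𝔷) (φ 𝔵 y)

/-- A `𝒯`-functor `f : (X,a) → (Y,b)`. -/
def IsTFunctor {X Y : Type u} (a : 𝒯.TCatStr X) (b : 𝒯.TCatStr Y) (f : X → Y) : Prop :=
  ∀ (𝔵 : T X) (x : X), a.rel 𝔵 x ≤ b.rel (𝒯.map f 𝔵) (f x)

/-- A fully faithful `𝒯`-functor. -/
def FullyFaithful {X Y : Type u} (a : 𝒯.TCatStr X) (b : 𝒯.TCatStr Y) (f : X → Y) : Prop :=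
  ∀ (𝔵 : T X) (x : X), a.rel 𝔵 x = b.rel (𝒯.map f 𝔵) (f x)

/-- The order `f ≤ g ⟺ f^* ≤ g^*` on `𝒯`-functors `X → (Y,b)`. -/
def funLE {X Y : Type u} (b : 𝒯.TCatStr Y) (f g : X → Y) : Prop :=
  ∀ (𝔶 : T Y) (x : X), b.rel 𝔶 (f x) ≤ b.rel 𝔶 (g x)

/-- Equivalence `f ≅ g ⟺ f^* = g^*` of `𝒯`-functors `X → (Y,b)`. -/
def FunEquiv {X Y : Type u} (b : 𝒯.TCatStr Y) (f g : X → Y) : Prop :=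
  ∀ (𝔶 : T Y) (x : X), b.rel 𝔶 (f x) = b.rel 𝔶 (g x)

/-- `f ⊣ g`:  `1_X ≤ g·f` and `f·g ≤ 1_Y`. -/
def IsAdjunction {X Y : Type u} (a : 𝒯.TCatStr X) (b : 𝒯.TCatStr Y)
    (f : X → Y) (g : Y → X) : Prop :=
  (∀ (𝔵 : T X) (x : X), a.rel 𝔵 x ≤ a.rel 𝔵 (g (f x))) ∧
    (∀ (𝔶 : T Y) (y : Y), b.rel 𝔶 (f (g y)) ≤ b.rel 𝔶 y)

/-- A left adjoint `𝒯`-functor. -/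
def IsLeftAdjoint {X Y : Type u} (a : 𝒯.TCatStr X) (b : 𝒯.TCatStr Y) (f : X → Y) : Prop :=
  IsTFunctor a b f ∧ ∃ g : Y → X, IsTFunctor b a g ∧ IsAdjunction a b f g

/-- L-separatedness: equivalent `𝒯`-functors into `X` are equal. -/
def Separated {X : Type u} (a : 𝒯.TCatStr X) : Prop :=
  ∀ (A : Type u) (as : 𝒯.TCatStr A) (f g : A → X),
    IsTFunctor as a f → IsTFunctor as a g → FunEquiv a f g → f = g

/-- Injectivity with respect to fully faithful `𝒯`-functors. -/
def Injective {X : Type u} (a : 𝒯.TCatStr X) : Prop :=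
  ∀ (A B : Type u) (as : 𝒯.TCatStr A) (bs : 𝒯.TCatStr B) (f : A → X) (i : A → B),
    IsTFunctor as a f → IsTFunctor as bs i → FullyFaithful as bs i →
      ∃ g : B → X, IsTFunctor bs a g ∧ FunEquiv a (g ∘ i) f

/-- `g : Z → X` is the `ψ`-weighted colimit of `h : A → X`, i.e. `g_* = h_* ⟜ ψ`. -/
def IsColimit {X A Z : Type u} (a : 𝒯.TCatStr X) (h : A → X) (ψ : T A → Z → V)
    (g : Z → X) : Prop :=
  ∀ (𝔷 : T Z) (x : X), modStar a g 𝔷 x = 𝒯.extend (modStar a h) ψ 𝔷 x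

/-- Cocompleteness: every weighted diagram has a colimit. -/
def Cocomplete {X : Type u} (a : 𝒯.TCatStr X) : Prop :=
  ∀ (A Z : Type u) (as : 𝒯.TCatStr A) (cs : 𝒯.TCatStr Z) (h : A → X),
    IsTFunctor as a h → ∀ ψ : T A → Z → V, 𝒯.IsTModRel as.rel cs.rel ψ →
      ∃ g : Z → X, IsTFunctor cs a g ∧ IsColimit a h ψ g

/-- Cocontinuity: preservation of all weighted colimits. -/
def Cocontinuous {X Y : Type u} (a : 𝒯.TCatStr X) (b : 𝒯.TCatStr Y) (f : X → Y) : Prop :=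
  ∀ (A Z : Type u) (as : 𝒯.TCatStr A) (cs : 𝒯.TCatStr Z) (h : A → X)
    (ψ : T A → Z → V) (g : Z → X),
    IsTFunctor as a h → 𝒯.IsTModRel as.rel cs.rel ψ → IsTFunctor cs a g →
      IsColimit a h ψ g → IsColimit b (f ∘ h) ψ (f ∘ g)

/-- A presheaf on `(X,a)`: a `𝒯`-module `X ⇸∘ G`, where `G = (1, e_1°)`. -/
def IsPresheaf {X : Type u} (a : 𝒯.TCatStr X) (ψ : T X → V) : Prop :=
  𝒯.IsTModRel a.rel (𝒯.unitRel PUnit) (fun 𝔵 _ => ψ 𝔵)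

/-- The underlying set of the presheaf `𝒯`-category `X̂`. -/
def Hat {X : Type u} (a : 𝒯.TCatStr X) : Type u := {ψ : T X → V // IsPresheaf a ψ}

/-- The `𝒯`-category structure `⟦-,-⟧` of `V^{|X|}`. -/
def powRel (𝒯 : TopTheory V T) (X : Type u) (𝔭 : T (T X → V)) (ψ : T X → V) : V :=
  ⨅ 𝔮 : {q : T ((T X) × (T X → V)) // 𝒯.map Prod.snd q = 𝔭},
    𝒯.ihom (𝒯.xi (𝒯.map (fun p => p.2 p.1) 𝔮.1)) (ψ (𝒯.m (𝒯.map Prod.fst 𝔮.1)))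

/-- `hs` is the `𝒯`-category structure on `X̂` inherited from `V^{|X|}`. -/
def IsHatStr {X : Type u} (a : 𝒯.TCatStr X) (hs : 𝒯.TCatStr (Hat a)) : Prop :=
  ∀ (𝔭 : T (Hat a)) (ψ : Hat a), hs.rel 𝔭 ψ = 𝒯.powRel X (𝒯.map Subtype.val 𝔭) ψ.1

/-- `y` is the Yoneda functor `X → X̂`, `y x = a(-,x)`. -/
def IsYoneda {X : Type u} (a : 𝒯.TCatStr X) (y : X → Hat a) : Prop :=
  ∀ (x : X) (𝔵 : T X), (y x).1 𝔵 = a.rel 𝔵 x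

/-- The underlying map `ψ ↦ ψ ∘ f^*` of `f̂ : X̂ → Ŷ`. -/
def hatMapRel {X Y : Type u} (b : 𝒯.TCatStr Y) (f : X → Y) (ψ : T X → V) (𝔶 : T Y) : V :=
  𝒯.kleisli (fun 𝔵 (_ : PUnit.{u + 1}) => ψ 𝔵) (modCostar b f) 𝔶 PUnit.unit

/-- `fh` is the `𝒯`-functor `f̂ : X̂ → Ŷ`, with underlying map `ψ ↦ ψ ∘ f^*`. -/
def IsHatMap {X Y : Type u} (a : 𝒯.TCatStr X) (b : 𝒯.TCatStr Y) (f : X → Y)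
    (fh : Hat a → Hat b) : Prop :=
  ∀ (ψ : Hat a) (𝔶 : T Y), (fh ψ).1 𝔶 = hatMapRel b f ψ.1 𝔶

/-- An inhabited `𝒯`-module: `k ≤ ⋀_y ⋁_𝔵 φ(𝔵,y)`. -/
def InhabitedMod (𝒯 : TopTheory V T) {X Y : Type u} (φ : T X → Y → V) : Prop :=
  𝒯.unit ≤ ⨅ y : Y, ⨆ 𝔵 : T X, φ 𝔵 y

/-- A dense `𝒯`-functor: `f_*` is inhabited. -/
def Dense {X Y : Type u} (b : 𝒯.TCatStr Y) (f : X → Y) : Prop :=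
  𝒯.InhabitedMod (modStar b f)

/-- The underlying set of `X⁺ = {ψ ∈ X̂ ∣ ψ inhabited}`. -/
def Plus {X : Type u} (a : 𝒯.TCatStr X) : Type u :=
  {ψ : Hat a // 𝒯.InhabitedMod (fun 𝔵 (_ : PUnit.{u + 1}) => ψ.1 𝔵)}

/-- `ps` is the `𝒯`-category structure on `X⁺` inherited from `X̂`. -/
def IsPlusStr {X : Type u} (a : 𝒯.TCatStr X) (hs : 𝒯.TCatStr (Hat a))
    (ps : 𝒯.TCatStr (Plus a)) : Prop :=
  ∀ (𝔭 : T (Plus a)) (ψ : Plus a), ps.rel 𝔭 ψ = hs.rel (𝒯.map Subtype.val 𝔭) ψ.1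

/-- Inhabited-cocompleteness: all colimits with inhabited weights exist. -/
def ICocomplete {X : Type u} (a : 𝒯.TCatStr X) : Prop :=
  ∀ (A Z : Type u) (as : 𝒯.TCatStr A) (cs : 𝒯.TCatStr Z) (h : A → X),
    IsTFunctor as a h → ∀ ψ : T A → Z → V, 𝒯.IsTModRel as.rel cs.rel ψ →
      𝒯.InhabitedMod ψ → ∃ g : Z → X, IsTFunctor cs a g ∧ IsColimit a h ψ g

/-- Inhabited-cocontinuity: preservation of all colimits with inhabited weights. -/
def ICocontinuous {X Y : Type u} (a : 𝒯.TCatStr X) (b : 𝒯.TCatStr Y) (f : X → Y) : Prop :=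
  ∀ (A Z : Type u) (as : 𝒯.TCatStr A) (cs : 𝒯.TCatStr Z) (h : A → X)
    (ψ : T A → Z → V) (g : Z → X),
    IsTFunctor as a h → 𝒯.IsTModRel as.rel cs.rel ψ → 𝒯.InhabitedMod ψ →
      IsTFunctor cs a g → IsColimit a h ψ g → IsColimit b (f ∘ h) ψ (f ∘ g)

/-! Both directions rest on one consequence of the laws `e_X° ≤ a` and `a ∘ a ≤ a`: whenever
`k ≤ a(e(p z), q z)` for all `z`, the composite `a ∘ a` bounds `a(Tq 𝔷, -)` by `a(Tp 𝔷, -)`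
and `a(-, p z)` by `a(-, q z)`. Evaluating `f_* = g^*` at `e x` and `e (g y)` gives exactly such
unit inequalities for `g ∘ f` and `f ∘ g`. Conversely, the unit `1 ≤ g ∘ f` of an adjunction
is such an inequality, and it turns `b(Tf 𝔵, y) ≤ a(T(g ∘ f) 𝔵, g y)` into `b(Tf 𝔵, y) ≤ a(𝔵, g y)`. -/

lemma tens_unit (𝒯 : TopTheory V T) (v : V) : 𝒯.tens v 𝒯.unit = v := by
  rw [𝒯.tens_comm]; exact 𝒯.unit_tens v

lemma tens_le_tens_left (𝒯 : TopTheory V T) {v v' : V} (u : V) (h : v ≤ v') :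
    𝒯.tens u v ≤ 𝒯.tens u v' := by
  have hv' : 𝒯.tens u v' = 𝒯.tens u (sSup {v, v'}) := by rw [sSup_pair, sup_eq_right.mpr h]
  rw [hv', 𝒯.tens_sSup]
  exact le_iSup₂_of_le v (by simp) le_rfl

lemma tens_le_tens (𝒯 : TopTheory V T) {u u' v v' : V} (hu : u ≤ u') (hv : v ≤ v') :
    𝒯.tens u v ≤ 𝒯.tens u' v' := by
  refine (𝒯.tens_le_tens_left u hv).trans ?_
  rw [𝒯.tens_comm u v', 𝒯.tens_comm u' v']
  exact 𝒯.tens_le_tens_left v' hu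

lemma xi_le_Txi (𝒯 : TopTheory V T) {X Y : Type u} (r : X → Y → V) (𝔴 : T (X × Y)) :
    𝒯.xi (𝒯.map (fun p => r p.1 p.2) 𝔴) ≤ 𝒯.Txi r (𝒯.map Prod.fst 𝔴) (𝒯.map Prod.snd 𝔴) :=
  le_iSup_of_le ⟨𝔴, rfl, rfl⟩ le_rfl

lemma unit_le_Txi_map (𝒯 : TopTheory V T) {X Y Z : Type u} (r : X → Y → V)
    {p : Z → X} {q : Z → Y} (h : ∀ z, 𝒯.unit ≤ r (p z) (q z)) (𝔷 : T Z) :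
    𝒯.unit ≤ 𝒯.Txi r (𝒯.map p 𝔷) (𝒯.map q 𝔷) := by
  have hfst : 𝒯.map Prod.fst (𝒯.map (fun z => (p z, q z)) 𝔷) = 𝒯.map p 𝔷 := by
    rw [← 𝒯.map_comp]; rfl
  have hsnd : 𝒯.map Prod.snd (𝒯.map (fun z => (p z, q z)) 𝔷) = 𝒯.map q 𝔷 := by
    rw [← 𝒯.map_comp]; rfl
  calc 𝒯.unit = 𝒯.xi (𝒯.map (fun _ => 𝒯.unit) 𝔷) := (𝒯.xi_unit 𝔷).symm
    _ ≤ 𝒯.xi (𝒯.map (fun pr : X × Y => r pr.1 pr.2) (𝒯.map (fun z => (p z, q z)) 𝔷)) := by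
      rw [← 𝒯.map_comp]; exact 𝒯.xi_mono _ _ h 𝔷
    _ ≤ _ := hfst ▸ hsnd ▸ 𝒯.xi_le_Txi r _

lemma le_Txi_e (𝒯 : TopTheory V T) {X Y : Type u} (r : X → Y → V) (x : X) (y : Y) :
    r x y ≤ 𝒯.Txi r (𝒯.e x) (𝒯.e y) := by
  have h := 𝒯.xi_le_Txi r (𝒯.e (x, y))
  rwa [𝒯.e_nat, 𝒯.e_nat, 𝒯.e_nat, 𝒯.xi_e] at h

namespace TCatStr

lemma tens_Txi_rel_le {X : Type u} (a : 𝒯.TCatStr X) (𝔛 : T (T X)) (𝔶 : T X) (x : X) :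
    𝒯.tens (𝒯.Txi a.rel 𝔛 𝔶) (a.rel 𝔶 x) ≤ a.rel (𝒯.m 𝔛) x := by
  refine le_trans ?_ (a.comp _ x)
  unfold kleisli
  exact le_iSup_of_le ⟨𝔛, rfl⟩ (le_iSup_of_le 𝔶 le_rfl)

lemma rel_map_le_rel_map {X Z : Type u} (a : 𝒯.TCatStr X) {p q : Z → X}
    (h : ∀ z, 𝒯.unit ≤ a.rel (𝒯.e (p z)) (q z)) (𝔷 : T Z) (x : X) :
    a.rel (𝒯.map q 𝔷) x ≤ a.rel (𝒯.map p 𝔷) x := by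
  have hm : 𝒯.m (𝒯.map (𝒯.e ∘ p) 𝔷) = 𝒯.map p 𝔷 := by
    rw [𝒯.map_comp, 𝒯.m_map_e]
  calc a.rel (𝒯.map q 𝔷) x = 𝒯.tens 𝒯.unit (a.rel (𝒯.map q 𝔷) x) := (𝒯.unit_tens _).symm
    _ ≤ 𝒯.tens (𝒯.Txi a.rel (𝒯.map (𝒯.e ∘ p) 𝔷) (𝒯.map q 𝔷)) (a.rel (𝒯.map q 𝔷) x) :=
      𝒯.tens_le_tens (𝒯.unit_le_Txi_map a.rel h 𝔷) le_rfl
    _ ≤ a.rel (𝒯.map p 𝔷) x := hm ▸ a.tens_Txi_rel_le _ _ x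

lemma funLE_of_unit_le {X Z : Type u} (a : 𝒯.TCatStr X) {p q : Z → X}
    (h : ∀ z, 𝒯.unit ≤ a.rel (𝒯.e (p z)) (q z)) : funLE a p q := fun 𝔵 z =>
  calc a.rel 𝔵 (p z) = 𝒯.tens (a.rel 𝔵 (p z)) 𝒯.unit := (𝒯.tens_unit _).symm
    _ ≤ 𝒯.tens (𝒯.Txi a.rel (𝒯.e 𝔵) (𝒯.e (p z))) (a.rel (𝒯.e (p z)) (q z)) :=
      𝒯.tens_le_tens (𝒯.le_Txi_e a.rel 𝔵 (p z)) (h z)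
    _ ≤ a.rel 𝔵 (q z) := by simpa only [𝒯.m_e] using a.tens_Txi_rel_le (𝒯.e 𝔵) _ (q z)

end TCatStr

lemma modStar_eq_modCostar_of_isLeftAdjoint {X Y : Type u} {a : 𝒯.TCatStr X}
    {b : 𝒯.TCatStr Y} {f : X → Y} {g : Y → X} (hf : IsTFunctor a b f) (hg : IsTFunctor b a g)
    (hfg : IsAdjunction a b f g) (𝔵 : T X) (y : Y) :
    b.rel (𝒯.map f 𝔵) y = a.rel 𝔵 (g y) := by
  obtain ⟨hunit, hcounit⟩ := hfg
  refine le_antisymm ?_ ((hf 𝔵 (g y)).trans (hcounit _ y))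
  calc b.rel (𝒯.map f 𝔵) y ≤ a.rel (𝒯.map g (𝒯.map f 𝔵)) (g y) := hg _ y
    _ = a.rel (𝒯.map (g ∘ f) 𝔵) (g y) := by rw [𝒯.map_comp]
    _ ≤ a.rel (𝒯.map id 𝔵) (g y) :=
      a.rel_map_le_rel_map (fun x => (a.le_refl x).trans (hunit _ x)) 𝔵 (g y)
    _ = a.rel 𝔵 (g y) := by rw [𝒯.map_id, id]

lemma isLeftAdjoint_of_modStar_eq_modCostar {X Y : Type u} {a : 𝒯.TCatStr X}
    {b : 𝒯.TCatStr Y} {f : X → Y} {g : Y → X}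
    (heq : ∀ (𝔵 : T X) (y : Y), b.rel (𝒯.map f 𝔵) y = a.rel 𝔵 (g y)) :
    IsLeftAdjoint a b f := by
  have hunit : ∀ x, 𝒯.unit ≤ a.rel (𝒯.e x) (g (f x)) := fun x => by
    rw [← heq, 𝒯.e_nat]; exact b.le_refl (f x)
  have hcounit : ∀ y, 𝒯.unit ≤ b.rel (𝒯.e (f (g y))) y := fun y => by
    rw [← 𝒯.e_nat, heq]; exact a.le_refl (g y)
  have hunit_le : funLE a id (g ∘ f) := a.funLE_of_unit_le hunit
  refine ⟨fun 𝔵 x => (hunit_le 𝔵 x).trans (heq 𝔵 (f x)).ge, g, fun 𝔶 y => ?_,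
    hunit_le, b.funLE_of_unit_le hcounit⟩
  calc b.rel 𝔶 y = b.rel (𝒯.map id 𝔶) y := by rw [𝒯.map_id, id]
    _ ≤ b.rel (𝒯.map (f ∘ g) 𝔶) y := b.rel_map_le_rel_map hcounit 𝔶 y
    _ = a.rel (𝒯.map g 𝔶) (g y) := by rw [𝒯.map_comp, heq]

theorem statement12_general (𝒯 : TopTheory V T) {X Y : Type u}
    (a : 𝒯.TCatStr X) (b : 𝒯.TCatStr Y) (f : X → Y) :
    IsLeftAdjoint a b f ↔
      ∃ g : Y → X, ∀ (𝔵 : T X) (y : Y), b.rel (𝒯.map f 𝔵) y = a.rel 𝔵 (g y) :=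
  ⟨fun ⟨hf, g, hg, hfg⟩ => ⟨g, modStar_eq_modCostar_of_isLeftAdjoint hf hg hfg⟩,
    fun ⟨_, heq⟩ => isLeftAdjoint_of_modStar_eq_modCostar heq⟩

/-- Proposition 2.1. A `𝒯`-functor `f : (X,a) → (Y,b)` is left
adjoint if and only if there exists a function `g : Y → X` such that
`b(Tf(𝔵), y) = a(𝔵, g(y))` for all `𝔵 ∈ T X`, `y ∈ Y`, i.e. `f_* = g^*`. -/
theorem statement12 (𝒯 : TopTheory V T) {X Y : Type u}
    (a : 𝒯.TCatStr X) (b : 𝒯.TCatStr Y) (f : X → Y) (hf : IsTFunctor a b f) :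
    IsLeftAdjoint a b f ↔
      ∃ g : Y → X, ∀ (𝔵 : T X) (y : Y), b.rel (𝒯.map f 𝔵) y = a.rel 𝔵 (g y) :=
  statement12_general 𝒯 a b f

end TopTheory

end Paper
end

section
/- For every 𝒯-category (X,a) and every 𝒯-module ψ: X ⇸∘ G, one has (y_X)_* ⟜ ψ = ⟨ψ⟩_*; that is, ⟨ψ⟩ ≅ colim(ψ, y_X), so every presheaf in X̂ is a weighted colimit of representables. -/
universe u

namespace Paper

namespace TopTheory

variable {V : Type u} [CompleteLattice V] {T : Type u → Type u}

variable {𝒯 : TopTheory V T}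

/-!
By (BC), the structure of `V^{|X|}` at `T f 𝔷` is the extension `g ⟜ f°` of `g` along the
transposed relation `f°(𝔵, z) = f z 𝔵`. Hence the right-hand side is `h ⟜ ψ`, and
`(y_X)_*(-, h) = h ⟜ a`. The Yoneda lemma `h ⟜ a = h` for a presheaf `h` (the unit law
`e_X° ≤ a` gives `≤`, the module law `h ∘ a ≤ h` gives `≥`) turns the left-hand side into
`h ⟜ ψ` too.
-/

section

variable (𝒯)

lemma tens_mono_right (u : V) {v v' : V} (h : v ≤ v') : 𝒯.tens u v ≤ 𝒯.tens u v' := by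
  have hsup := 𝒯.tens_sSup u {v, v'}
  rw [sSup_pair, sup_eq_right.mpr h] at hsup
  rw [hsup]
  exact le_biSup _ (Set.mem_insert v _)

lemma tens_mono_left {u u' : V} (v : V) (h : u ≤ u') : 𝒯.tens u v ≤ 𝒯.tens u' v := by
  rw [𝒯.tens_comm u, 𝒯.tens_comm u']
  exact 𝒯.tens_mono_right v h

lemma le_ihom_iff {u w z : V} : z ≤ 𝒯.ihom u w ↔ 𝒯.tens u z ≤ w := by
  refine ⟨fun h => (𝒯.tens_mono_right u h).trans ?_, fun h => le_sSup h⟩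
  rw [ihom, 𝒯.tens_sSup]
  exact iSup₂_le fun _ hz => hz

lemma ihom_anti {u u' : V} (w : V) (h : u ≤ u') : 𝒯.ihom u' w ≤ 𝒯.ihom u w := by
  rw [le_ihom_iff]
  exact (𝒯.tens_mono_left _ h).trans ((𝒯.le_ihom_iff).mp le_rfl)

lemma ihom_unit (w : V) : 𝒯.ihom 𝒯.unit w = w :=
  le_antisymm (𝒯.unit_tens (𝒯.ihom 𝒯.unit w) ▸ (𝒯.le_ihom_iff).mp le_rfl)
    ((𝒯.le_ihom_iff).mpr (𝒯.unit_tens w).le)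

lemma ihom_iSup {ι : Sort*} (u : ι → V) (w : V) :
    𝒯.ihom (⨆ i, u i) w = ⨅ i, 𝒯.ihom (u i) w := by
  refine le_antisymm (le_iInf fun i => 𝒯.ihom_anti w (le_iSup u i)) ?_
  rw [le_ihom_iff, 𝒯.tens_comm, iSup, 𝒯.tens_sSup]
  refine iSup₂_le ?_
  rintro _ ⟨i, rfl⟩
  rw [𝒯.tens_comm, ← le_ihom_iff]
  exact iInf_le _ i

lemma map_map {X Y Z : Type u} (g : Y → Z) (f : X → Y) (𝔵 : T X) :
    𝒯.map g (𝒯.map f 𝔵) = 𝒯.map (fun x => g (f x)) 𝔵 :=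
  (𝒯.map_comp g f 𝔵).symm

lemma unit_le_xi_map {X : Type u} {φ : X → V} (h : ∀ x, 𝒯.unit ≤ φ x) (𝔵 : T X) :
    𝒯.unit ≤ 𝒯.xi (𝒯.map φ 𝔵) :=
  (𝒯.xi_unit 𝔵).symm.le.trans (𝒯.xi_mono _ _ h 𝔵)

lemma xi_map_le_Txi {X Y : Type u} (r : X → Y → V) (𝔴 : T (X × Y)) :
    𝒯.xi (𝒯.map (fun p => r p.1 p.2) 𝔴) ≤ 𝒯.Txi r (𝒯.map Prod.fst 𝔴) (𝒯.map Prod.snd 𝔴) :=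
  le_iSup (fun 𝔴' : {w : T (X × Y) // 𝒯.map Prod.fst w = 𝒯.map Prod.fst 𝔴 ∧
      𝒯.map Prod.snd w = 𝒯.map Prod.snd 𝔴} => 𝒯.xi (𝒯.map (fun p => r p.1 p.2) 𝔴'.1))
    ⟨𝔴, rfl, rfl⟩

lemma tens_Txi_le_kleisli {X Y Z : Type u} (β : T Y → Z → V) (α : T X → Y → V)
    (𝔛 : T (T X)) (𝔶 : T Y) (z : Z) :
    𝒯.tens (𝒯.Txi α 𝔛 𝔶) (β 𝔶 z) ≤ 𝒯.kleisli β α (𝒯.m 𝔛) z :=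
  le_iSup_of_le (⟨𝔛, rfl⟩ : {𝔛' : T (T X) // 𝒯.m 𝔛' = 𝒯.m 𝔛}) (le_iSup_of_le 𝔶 le_rfl)

lemma extend_eq_iInf {X Y Z : Type u} (φ : T X → Y → V) (ψ : T X → Z → V) (𝔷 : T Z) (y : Y) :
    𝒯.extend φ ψ 𝔷 y = ⨅ 𝔴 : {𝔴 : T (T X × Z) // 𝒯.map Prod.snd 𝔴 = 𝔷},
      𝒯.ihom (𝒯.xi (𝒯.map (fun p => ψ p.1 p.2) 𝔴.1)) (φ (𝒯.m (𝒯.map Prod.fst 𝔴.1)) y) := by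
  simp only [extend, Txi, ihom_iSup]
  refine le_antisymm (le_iInf fun 𝔴 => ?_) (le_iInf fun 𝔵 => le_iInf fun 𝔛 => le_iInf ?_)
  · exact iInf_le_of_le (𝒯.m (𝒯.map Prod.fst 𝔴.1)) <| iInf_le_of_le ⟨_, rfl⟩ <|
      iInf_le_of_le ⟨𝔴.1, rfl, 𝔴.2⟩ le_rfl
  · rintro ⟨𝔴, h𝔛, h𝔷⟩
    refine iInf_le_of_le ⟨𝔴, h𝔷⟩ ?_
    dsimp only
    rw [h𝔛, 𝔛.2]

lemma powRel_map_eq_extend {X Z : Type u} (f : Z → T X → V) (𝔷 : T Z) (g : T X → V) :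
    𝒯.powRel X (𝒯.map f 𝔷) g =
      𝒯.extend (fun 𝔵 (_ : PUnit.{u + 1}) => g 𝔵) (fun 𝔵 z => f z 𝔵) 𝔷 PUnit.unit := by
  rw [extend_eq_iInf]
  refine le_antisymm (le_iInf ?_) (le_iInf fun 𝔮 => ?_)
  · rintro ⟨𝔯, rfl⟩
    exact iInf_le_of_le ⟨𝒯.map (fun p => (p.1, f p.2)) 𝔯, by simp only [map_map]⟩
      (le_of_eq (by simp only [map_map]))
  · obtain ⟨𝔴, hq, h𝔷⟩ := 𝒯.map_bc Prod.snd f 𝔮.1 𝔷 𝔮.2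
    refine iInf_le_of_le ⟨𝒯.map (fun w => (w.1.1.1, w.1.2)) 𝔴, by rw [map_map, ← h𝔷]⟩
      (le_of_eq ?_)
    have hev : (fun w : {p : (T X × (T X → V)) × Z // p.1.2 = f p.2} => f w.1.2 w.1.1.1) =
        fun w => w.1.1.2 w.1.1.1 := funext fun w => congrFun w.2.symm w.1.1.1
    simp only [← hq, map_map, hev]

end

lemma extend_rel_eq_of_isPresheaf {X : Type u} (a : 𝒯.TCatStr X) {h : T X → V}
    (hh : IsPresheaf a h) (𝔵 : T X) :
    𝒯.extend (fun 𝔵 (_ : PUnit.{u + 1}) => h 𝔵) a.rel 𝔵 PUnit.unit = h 𝔵 := by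
  rw [extend_eq_iInf]
  refine le_antisymm ?_ (le_iInf fun 𝔴 => ?_)
  · have hsnd : 𝒯.map Prod.snd (𝒯.map (fun x => (𝒯.e x, x)) 𝔵) = 𝔵 := by
      rw [map_map]; exact congrFun 𝒯.map_id 𝔵
    refine iInf_le_of_le ⟨_, hsnd⟩ ((𝒯.ihom_anti (u := 𝒯.unit) _ ?_).trans_eq ?_)
    · rw [map_map]
      exact 𝒯.unit_le_xi_map a.le_refl 𝔵
    · simp only [map_map, m_map_e, ihom_unit]
  · obtain ⟨𝔴, rfl⟩ := 𝔴
    rw [le_ihom_iff]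
    exact ((𝒯.tens_mono_left _ (𝒯.xi_map_le_Txi a.rel 𝔴)).trans
      (𝒯.tens_Txi_le_kleisli _ _ _ _ PUnit.unit)).trans (hh.1 _ PUnit.unit)

lemma rel_map_of_isHatStr {X Z : Type u} {a : 𝒯.TCatStr X} {hs : 𝒯.TCatStr (Hat a)}
    (hhs : IsHatStr a hs) (f : Z → Hat a) (𝔷 : T Z) (h : Hat a) :
    hs.rel (𝒯.map f 𝔷) h = 𝒯.powRel X (𝒯.map (fun z => (f z).1) 𝔷) h.1 := by
  rw [hhs]
  exact congrArg (fun t => 𝒯.powRel X t h.1) (𝒯.map_map _ _ _)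

lemma modStar_yoneda {X : Type u} {a : 𝒯.TCatStr X} {hs : 𝒯.TCatStr (Hat a)}
    (hhs : IsHatStr a hs) {y : X → Hat a} (hy : IsYoneda a y) :
    modStar hs y = fun 𝔵 h => h.1 𝔵 := by
  funext 𝔵 h
  have hy' : (fun x => (y x).1) = fun x 𝔵' => a.rel 𝔵' x := funext fun x => funext (hy x)
  rw [modStar, rel_map_of_isHatStr hhs, hy', powRel_map_eq_extend]
  exact extend_rel_eq_of_isPresheaf a h.2 𝔵

/-- Proposition 2.3(1). For every `𝒯`-category `(X,a)` and every
`𝒯`-module `ψ : X ⇸∘ G`, one has `(y_X)_* ⟜ ψ = ⟨ψ⟩_*`; that is,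
`⟨ψ⟩ ≅ colim(ψ, y_X)`, so every presheaf is a weighted colimit of representables. -/
theorem statement13 (𝒯 : TopTheory V T) {X : Type u} (a : 𝒯.TCatStr X)
    (hs : 𝒯.TCatStr (Hat a)) (hhs : IsHatStr a hs)
    (y : X → Hat a) (hy : IsYoneda a y)
    (ψ : Hat a) :
    ∀ (𝔞 : T PUnit.{u + 1}) (h : Hat a),
      𝒯.extend (modStar hs y) (fun 𝔵 (_ : PUnit.{u + 1}) => ψ.1 𝔵) 𝔞 h =
        hs.rel (𝒯.map (fun _ => ψ) 𝔞) h := by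
  intro 𝔞 h
  rw [modStar_yoneda hhs hy, rel_map_of_isHatStr hhs, powRel_map_eq_extend]
  rfl

end TopTheory

end Paper
end
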